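/- arXiv:1605.09520 — 4 statements merged into one kernel-verified Lean document; each statement's English description precedes it below -/
import Mathlib

section
/- Let M be a finite matroid and let C₁, C₂ ⊆ E(M) be two circuits of M such that |C₁ ∩ C₂| = 1 and r_M(C₁) + r_M(C₂) = r_M(C₁ ∪ C₂) + 1. Then the symmetric difference C₁ Δ C₂ is also a circuit of M. -/
/-- A finite matroid on ground set `E`, given by its rank function, which satisfies
`r ∅ = 0`, the unit-increase property, and submodularity (on subsets of `E`). -/
structure FinMatroid (α : Type*) [DecidableEq α] where
  E : Finset α
  r : Finset α → ℕ
  r_empty : r ∅ = 0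
  r_le_insert : ∀ X ⊆ E, ∀ e ∈ E, r X ≤ r (insert e X)
  r_insert_le : ∀ X ⊆ E, ∀ e ∈ E, r (insert e X) ≤ r X + 1
  r_submod : ∀ X ⊆ E, ∀ Y ⊆ E, r (X ∪ Y) + r (X ∩ Y) ≤ r X + r Y

namespace FinMatroid

variable {α : Type*} [DecidableEq α]

/-- A set is independent if it is a subset of the ground set whose rank equals its
cardinality. -/
def Indep (M : FinMatroid α) (X : Finset α) : Prop :=
  X ⊆ M.E ∧ M.r X = X.card

/-- A set is dependent if it is a subset of the ground set that is not independent. -/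
def Dep (M : FinMatroid α) (X : Finset α) : Prop :=
  X ⊆ M.E ∧ M.r X ≠ X.card

/-- A circuit is a minimal dependent set: a dependent set all of whose proper subsets
are independent. -/
def Circuit (M : FinMatroid α) (C : Finset α) : Prop :=
  M.Dep C ∧ ∀ C' ⊂ C, M.Indep C'

/-- The connectivity function `λ_M(X) = r(X) + r(E \ X) - r(E)`. -/
def lambda (M : FinMatroid α) (X : Finset α) : ℤ :=
  (M.r X : ℤ) + (M.r (M.E \ X) : ℤ) - (M.r M.E : ℤ)

/-- `μ_M(X, A) = r(X ∪ A) + r((E \ X) ∪ A) - r(E)`. -/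
def mu (M : FinMatroid α) (X A : Finset α) : ℤ :=
  (M.r (X ∪ A) : ℤ) + (M.r ((M.E \ X) ∪ A) : ℤ) - (M.r M.E : ℤ)

/-- The closure `cl_M(X) = {e ∈ E : r(X ∪ {e}) = r(X)}`. -/
def cl (M : FinMatroid α) (X : Finset α) : Finset α :=
  M.E.filter fun e => M.r (insert e X) = M.r X

/-- The width of the path-decomposition (ordering) given by the list `L`:
the maximum of `λ_M({e₁, …, e_i})` over the nonempty prefixes of `L`. -/
def pdWidth (M : FinMatroid α) (L : List α) : ℤ :=
  ((List.range L.length).map fun i => M.lambda (L.take (i + 1)).toFinset).foldr max 0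

/-- The path-width of a matroid: the minimum width over all orderings of the ground
set. -/
noncomputable def pathwidth (M : FinMatroid α) : ℤ :=
  sInf (M.pdWidth '' { L : List α | L.Nodup ∧ L.toFinset = M.E })

end FinMatroid

namespace FinMatroid

variable {α : Type*} [DecidableEq α]

lemma r_le_r_union' (M : FinMatroid α) (s : Finset α) :
    ∀ X ⊆ M.E, s ⊆ M.E → M.r X ≤ M.r (X ∪ s) := by
  induction s using Finset.induction_on with
  | empty => intro X _ _; simp
  | @insert a s' ha ih =>
    intro X hX hs
    have hs' : s' ⊆ M.E := (Finset.subset_insert a s').trans hs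
    have haE : a ∈ M.E := hs (Finset.mem_insert_self a s')
    have h1 : M.r X ≤ M.r (X ∪ s') := ih X hX hs'
    have h2 : M.r (X ∪ s') ≤ M.r (insert a (X ∪ s')) :=
      M.r_le_insert _ (Finset.union_subset hX hs') a haE
    rw [Finset.union_insert]
    omega

lemma r_union_le_add (M : FinMatroid α) (s : Finset α) :
    ∀ X ⊆ M.E, s ⊆ M.E → M.r (X ∪ s) ≤ M.r X + s.card := by
  induction s using Finset.induction_on with
  | empty => intro X _ _; simp
  | @insert a s' ha ih =>
    intro X hX hs
    have hs' : s' ⊆ M.E := (Finset.subset_insert a s').trans hs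
    have haE : a ∈ M.E := hs (Finset.mem_insert_self a s')
    have h1 : M.r (X ∪ s') ≤ M.r X + s'.card := ih X hX hs'
    have h2 : M.r (insert a (X ∪ s')) ≤ M.r (X ∪ s') + 1 :=
      M.r_insert_le _ (Finset.union_subset hX hs') a haE
    rw [Finset.union_insert, Finset.card_insert_of_notMem ha]
    omega

lemma r_mono (M : FinMatroid α) {X Y : Finset α} (hY : Y ⊆ M.E) (hXY : X ⊆ Y) :
    M.r X ≤ M.r Y := by
  have := M.r_le_r_union' (Y \ X) X (hXY.trans hY) ((Finset.sdiff_subset).trans hY)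
  rwa [Finset.union_sdiff_of_subset hXY] at this

lemma r_le_card (M : FinMatroid α) {X : Finset α} (hX : X ⊆ M.E) :
    M.r X ≤ X.card := by
  have := M.r_union_le_add X ∅ (by simp) hX
  simpa [M.r_empty] using this

lemma r_le_add_sdiff (M : FinMatroid α) {X Y : Finset α} (hY : Y ⊆ M.E) (hXY : X ⊆ Y) :
    M.r Y ≤ M.r X + (Y \ X).card := by
  have := M.r_union_le_add (Y \ X) X (hXY.trans hY) ((Finset.sdiff_subset).trans hY)
  rwa [Finset.union_sdiff_of_subset hXY] at this

lemma indep_subset (M : FinMatroid α) {X Y : Finset α} (hY : M.Indep Y) (hXY : X ⊆ Y) :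
    M.Indep X := by
  obtain ⟨hYE, hYr⟩ := hY
  have hXE : X ⊆ M.E := hXY.trans hYE
  have h1 : M.r Y ≤ M.r X + (Y \ X).card := M.r_le_add_sdiff hYE hXY
  have h2 : M.r X ≤ X.card := M.r_le_card hXE
  have h3 : (Y \ X).card + X.card = Y.card := Finset.card_sdiff_add_card_eq_card hXY
  exact ⟨hXE, by omega⟩

lemma circuit_rank (M : FinMatroid α) {C : Finset α} (hC : M.Circuit C) :
    M.r C + 1 = C.card := by
  obtain ⟨⟨hCE, hCr⟩, hmin⟩ := hC
  have hne : C.Nonempty := by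
    rcases C.eq_empty_or_nonempty with h | h
    · exact absurd (h ▸ M.r_empty) (by simpa [h] using hCr)
    · exact h
  obtain ⟨f, hf⟩ := hne
  have herase : M.Indep (C.erase f) := hmin _ (Finset.erase_ssubset hf)
  have h1 : M.r (C.erase f) ≤ M.r C := M.r_mono hCE (Finset.erase_subset f C)
  have h2 : M.r C ≤ C.card := M.r_le_card hCE
  have h3 : (C.erase f).card + 1 = C.card := Finset.card_erase_add_one hf
  have h4 := herase.2
  omega

/-- If `e` is in the closure of `X` and `X ⊆ Y`, then `e` is in the closure of `Y`. -/
lemma r_insert_eq_of_subset (M : FinMatroid α) {X Y : Finset α} {e : α}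
    (hY : Y ⊆ M.E) (hXY : X ⊆ Y) (he : e ∈ M.E)
    (hX : M.r (insert e X) = M.r X) : M.r (insert e Y) = M.r Y := by
  by_cases heY : e ∈ Y
  · rw [Finset.insert_eq_self.mpr heY]
  · have hXE : X ⊆ M.E := hXY.trans hY
    have hinsE : insert e X ⊆ M.E := Finset.insert_subset he hXE
    have hsub := M.r_submod Y hY (insert e X) hinsE
    have hu : Y ∪ insert e X = insert e Y := by
      rw [Finset.union_insert, Finset.union_eq_left.mpr hXY]
    have hi : Y ∩ insert e X = X := by
      ext a
      simp only [Finset.mem_inter, Finset.mem_insert]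
      constructor
      · rintro ⟨haY, rfl | haX⟩
        · exact absurd haY heY
        · exact haX
      · intro haX; exact ⟨hXY haX, Or.inr haX⟩
    rw [hu, hi, hX] at hsub
    have := M.r_le_insert Y hY e he
    omega

/-- Key step: removing one element of the symmetric difference yields an
independent set. -/
lemma indep_erase_aux (M : FinMatroid α) (C₁ C₂ : Finset α)
    (h₁ : M.Circuit C₁) (h₂ : M.Circuit C₂) {e f : α}
    (he : C₁ ∩ C₂ = {e})
    (hr : M.r C₁ + M.r C₂ = M.r (C₁ ∪ C₂) + 1)
    (hf₁ : f ∈ C₁) (hfe : f ≠ e) :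
    M.Indep (((C₁ ∪ C₂).erase e).erase f) := by
  have hC₁E : C₁ ⊆ M.E := h₁.1.1
  have hC₂E : C₂ ⊆ M.E := h₂.1.1
  have heC₁ : e ∈ C₁ := Finset.mem_inter.mp (he ▸ Finset.mem_singleton_self e) |>.1
  have heC₂ : e ∈ C₂ := Finset.mem_inter.mp (he ▸ Finset.mem_singleton_self e) |>.2
  have hfC₂ : f ∉ C₂ := fun h => hfe (Finset.mem_singleton.mp (he ▸ Finset.mem_inter.mpr ⟨hf₁, h⟩))
  have hUE : C₁ ∪ C₂ ⊆ M.E := Finset.union_subset hC₁E hC₂E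
  set A := ((C₁ ∪ C₂).erase e).erase f with hA
  have hAU : A ⊆ C₁ ∪ C₂ := (Finset.erase_subset _ _).trans (Finset.erase_subset _ _)
  have hAE : A ⊆ M.E := hAU.trans hUE
  -- ranks of the circuits
  have hrc₁ : M.r C₁ + 1 = C₁.card := M.circuit_rank h₁
  have hrc₂ : M.r C₂ + 1 = C₂.card := M.circuit_rank h₂
  -- r ((C₁ ∪ C₂).erase f) = r (C₁ ∪ C₂)
  have hCf : M.Indep (C₁.erase f) := h₁.2 _ (Finset.erase_ssubset hf₁)
  have hCfcard : (C₁.erase f).card + 1 = C₁.card := Finset.card_erase_add_one hf₁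
  have hXins : M.r (insert f (C₁.erase f)) = M.r (C₁.erase f) := by
    rw [Finset.insert_erase hf₁, hCf.2]; omega
  have hfU : f ∈ C₁ ∪ C₂ := Finset.mem_union_left _ hf₁
  have hsubUf : C₁.erase f ⊆ (C₁ ∪ C₂).erase f :=
    Finset.erase_subset_erase f (Finset.subset_union_left)
  have hUferase : M.r (insert f ((C₁ ∪ C₂).erase f)) = M.r ((C₁ ∪ C₂).erase f) :=
    M.r_insert_eq_of_subset ((Finset.erase_subset _ _).trans hUE) hsubUf
      (hC₁E hf₁) hXins
  have hUf : M.r ((C₁ ∪ C₂).erase f) = M.r (C₁ ∪ C₂) := by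
    rw [← hUferase, Finset.insert_erase hfU]
  -- set identities
  have hAunion : A ∪ C₂ = (C₁ ∪ C₂).erase f := by
    ext a
    simp only [hA, Finset.mem_union, Finset.mem_erase]
    constructor
    · rintro (⟨haf, _, h⟩ | h)
      · exact ⟨haf, h⟩
      · exact ⟨fun h' => hfC₂ (h' ▸ h), Or.inr h⟩
    · rintro ⟨haf, h | h⟩
      · by_cases hae : a = e
        · exact Or.inr (hae ▸ heC₂)
        · exact Or.inl ⟨haf, hae, Or.inl h⟩
      · exact Or.inr h
  have hAinter : A ∩ C₂ = C₂.erase e := by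
    ext a
    simp only [hA, Finset.mem_inter, Finset.mem_erase, Finset.mem_union]
    constructor
    · rintro ⟨⟨_, hae, _⟩, h⟩
      exact ⟨hae, h⟩
    · rintro ⟨hae, h⟩
      exact ⟨⟨fun h' => hfC₂ (h' ▸ h), hae, Or.inr h⟩, h⟩
  -- submodularity
  have hsub := M.r_submod A hAE C₂ hC₂E
  rw [hAunion, hAinter] at hsub
  have hCe : M.Indep (C₂.erase e) := h₂.2 _ (Finset.erase_ssubset heC₂)
  have hCecard : (C₂.erase e).card + 1 = C₂.card := Finset.card_erase_add_one heC₂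
  -- cardinalities
  have hUcard : (C₁ ∪ C₂).card + 1 = C₁.card + C₂.card := by
    have := Finset.card_union_add_card_inter C₁ C₂
    rw [he] at this
    simpa using this
  have hfUe : f ∈ (C₁ ∪ C₂).erase e := Finset.mem_erase.mpr ⟨hfe, hfU⟩
  have heU : e ∈ C₁ ∪ C₂ := Finset.mem_union_left _ heC₁
  have hc1 : A.card + 1 = ((C₁ ∪ C₂).erase e).card := by
    rw [hA]; exact Finset.card_erase_add_one hfUe
  have hc2 : ((C₁ ∪ C₂).erase e).card + 1 = (C₁ ∪ C₂).card :=
    Finset.card_erase_add_one heU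
  have hrA_le : M.r A ≤ A.card := M.r_le_card hAE
  have hCe2 := hCe.2
  exact ⟨hAE, by omega⟩

end FinMatroid

open FinMatroid in
/-- If `C₁, C₂` are circuits of a finite matroid `M` with `|C₁ ∩ C₂| = 1` and
`r(C₁) + r(C₂) = r(C₁ ∪ C₂) + 1`, then the symmetric difference `C₁ Δ C₂` is also a
circuit of `M`. -/
theorem circuit_symmDiff_of_rank_eq {α : Type*} [DecidableEq α] (M : FinMatroid α)
    (C₁ C₂ : Finset α) (h₁ : M.Circuit C₁) (h₂ : M.Circuit C₂)
    (hcap : (C₁ ∩ C₂).card = 1)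
    (hr : M.r C₁ + M.r C₂ = M.r (C₁ ∪ C₂) + 1) :
    M.Circuit (symmDiff C₁ C₂) := by
  obtain ⟨e, he⟩ := Finset.card_eq_one.mp hcap
  have hC₁E : C₁ ⊆ M.E := h₁.1.1
  have hC₂E : C₂ ⊆ M.E := h₂.1.1
  have heC₁ : e ∈ C₁ := Finset.mem_inter.mp (he ▸ Finset.mem_singleton_self e) |>.1
  have heC₂ : e ∈ C₂ := Finset.mem_inter.mp (he ▸ Finset.mem_singleton_self e) |>.2
  have heU : e ∈ C₁ ∪ C₂ := Finset.mem_union_left _ heC₁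
  have hUE : C₁ ∪ C₂ ⊆ M.E := Finset.union_subset hC₁E hC₂E
  have hD : symmDiff C₁ C₂ = (C₁ ∪ C₂).erase e := by
    ext a
    simp only [Finset.mem_symmDiff, Finset.mem_erase, Finset.mem_union]
    constructor
    · rintro (⟨h1, h2⟩ | ⟨h1, h2⟩)
      · exact ⟨fun h' => h2 (h' ▸ heC₂), Or.inl h1⟩
      · exact ⟨fun h' => h2 (h' ▸ heC₁), Or.inr h1⟩
    · rintro ⟨hae, h | h⟩
      · by_cases h2 : a ∈ C₂
        · exact absurd (Finset.mem_singleton.mp (he ▸ Finset.mem_inter.mpr ⟨h, h2⟩)) hae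
        · exact Or.inl ⟨h, h2⟩
      · by_cases h1 : a ∈ C₁
        · exact absurd (Finset.mem_singleton.mp (he ▸ Finset.mem_inter.mpr ⟨h1, h⟩)) hae
        · exact Or.inr ⟨h, h1⟩
  rw [hD]
  set D := (C₁ ∪ C₂).erase e with hDdef
  have hDU : D ⊆ C₁ ∪ C₂ := Finset.erase_subset _ _
  have hDE : D ⊆ M.E := hDU.trans hUE
  -- rank of D equals rank of the union
  have hCe : M.Indep (C₁.erase e) := h₁.2 _ (Finset.erase_ssubset heC₁)
  have hCecard : (C₁.erase e).card + 1 = C₁.card := Finset.card_erase_add_one heC₁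
  have hrc₁ : M.r C₁ + 1 = C₁.card := M.circuit_rank h₁
  have hrc₂ : M.r C₂ + 1 = C₂.card := M.circuit_rank h₂
  have hXins : M.r (insert e (C₁.erase e)) = M.r (C₁.erase e) := by
    rw [Finset.insert_erase heC₁, hCe.2]; omega
  have hsubD : C₁.erase e ⊆ D := Finset.erase_subset_erase e Finset.subset_union_left
  have hDins : M.r (insert e D) = M.r D :=
    M.r_insert_eq_of_subset hDE hsubD (hC₁E heC₁) hXins
  have hrD : M.r D = M.r (C₁ ∪ C₂) := by
    rw [← hDins, hDdef, Finset.insert_erase heU]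
  have hUcard : (C₁ ∪ C₂).card + 1 = C₁.card + C₂.card := by
    have := Finset.card_union_add_card_inter C₁ C₂
    rw [he] at this
    simpa using this
  have hDcard : D.card + 1 = (C₁ ∪ C₂).card := Finset.card_erase_add_one heU
  constructor
  · exact ⟨hDE, by omega⟩
  · intro S hS
    obtain ⟨f, hfD, hfS⟩ := Finset.exists_of_ssubset hS
    have hSsub : S ⊆ D.erase f := fun a ha =>
      Finset.mem_erase.mpr ⟨fun h' => hfS (h' ▸ ha), hS.1 ha⟩
    have hfU : f ∈ C₁ ∪ C₂ := hDU hfD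
    have hfe : f ≠ e := (Finset.mem_erase.mp hfD).1
    have hindep : M.Indep (D.erase f) := by
      rcases Finset.mem_union.mp hfU with hf₁ | hf₂
      · exact M.indep_erase_aux C₁ C₂ h₁ h₂ he hr hf₁ hfe
      · have he' : C₂ ∩ C₁ = {e} := by rw [Finset.inter_comm]; exact he
        have hr' : M.r C₂ + M.r C₁ = M.r (C₂ ∪ C₁) + 1 := by
          rw [Finset.union_comm]; omega
        have := M.indep_erase_aux C₂ C₁ h₂ h₁ he' hr' hf₂ hfe
        rwa [Finset.union_comm C₂ C₁] at this
    exact M.indep_subset hindep hSsub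
end

section
/- Let M be a finite matroid on ground set E and X ⊆ E. If e, f ∈ E are such that μ_M(X,{e}) = μ_M(X,{f}) = μ_M(X,{e,f}) = λ_M(X) + 1, then either both e, f ∈ X or both e, f ∉ X. -/
open FinMatroid in
/-- If `μ_M(X,{e}) = μ_M(X,{f}) = μ_M(X,{e,f}) = λ_M(X) + 1`, then either both `e, f ∈ X`
or both `e, f ∉ X`. -/
theorem same_side_of_mu_eq {α : Type*} [DecidableEq α] (M : FinMatroid α)
    (X : Finset α) (hX : X ⊆ M.E) (e f : α) (he : e ∈ M.E) (hf : f ∈ M.E)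
    (h1 : M.mu X {e} = M.lambda X + 1)
    (h2 : M.mu X {f} = M.lambda X + 1)
    (h3 : M.mu X {e, f} = M.lambda X + 1) :
    (e ∈ X ∧ f ∈ X) ∨ (e ∉ X ∧ f ∉ X) := by
  by_cases he' : e ∈ X
  · by_cases hf' : f ∈ X
    · exact Or.inl ⟨he', hf'⟩
    · exfalso
      have hfE : f ∈ M.E \ X := Finset.mem_sdiff.mpr ⟨hf, hf'⟩
      have hA : X ∪ {e} = X := by
        ext a; simp only [Finset.mem_union, Finset.mem_singleton]
        constructor
        · rintro (h | rfl) <;> [exact h; exact he']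
        · exact Or.inl
      have hB : (M.E \ X) ∪ {f} = M.E \ X := by
        ext a; simp only [Finset.mem_union, Finset.mem_singleton]
        constructor
        · rintro (h | rfl) <;> [exact h; exact hfE]
        · exact Or.inl
      have hC : X ∪ {e, f} = X ∪ {f} := by
        ext a; simp only [Finset.mem_union, Finset.mem_insert, Finset.mem_singleton]
        constructor
        · rintro (h | rfl | rfl) <;> [exact Or.inl h; exact Or.inl he'; exact Or.inr rfl]
        · rintro (h | rfl) <;> [exact Or.inl h; exact Or.inr (Or.inr rfl)]
      have hD : (M.E \ X) ∪ {e, f} = (M.E \ X) ∪ {e} := by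
        ext a; simp only [Finset.mem_union, Finset.mem_insert, Finset.mem_singleton]
        constructor
        · rintro (h | rfl | rfl) <;> [exact Or.inl h; exact Or.inr rfl; exact Or.inl hfE]
        · rintro (h | rfl) <;> [exact Or.inl h; exact Or.inr (Or.inl rfl)]
      simp only [FinMatroid.mu, FinMatroid.lambda, hA, hB, hC, hD] at h1 h2 h3
      omega
  · by_cases hf' : f ∈ X
    · exfalso
      have heE : e ∈ M.E \ X := Finset.mem_sdiff.mpr ⟨he, he'⟩
      have hA : X ∪ {f} = X := by
        ext a; simp only [Finset.mem_union, Finset.mem_singleton]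
        constructor
        · rintro (h | rfl) <;> [exact h; exact hf']
        · exact Or.inl
      have hB : (M.E \ X) ∪ {e} = M.E \ X := by
        ext a; simp only [Finset.mem_union, Finset.mem_singleton]
        constructor
        · rintro (h | rfl) <;> [exact h; exact heE]
        · exact Or.inl
      have hC : X ∪ {e, f} = X ∪ {e} := by
        ext a; simp only [Finset.mem_union, Finset.mem_insert, Finset.mem_singleton]
        constructor
        · rintro (h | rfl | rfl) <;> [exact Or.inl h; exact Or.inr rfl; exact Or.inl hf']
        · rintro (h | rfl) <;> [exact Or.inl h; exact Or.inr (Or.inl rfl)]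
      have hD : (M.E \ X) ∪ {e, f} = (M.E \ X) ∪ {f} := by
        ext a; simp only [Finset.mem_union, Finset.mem_insert, Finset.mem_singleton]
        constructor
        · rintro (h | rfl | rfl) <;> [exact Or.inl h; exact Or.inl heE; exact Or.inr rfl]
        · rintro (h | rfl) <;> [exact Or.inl h; exact Or.inr (Or.inr rfl)]
      simp only [FinMatroid.mu, FinMatroid.lambda, hA, hB, hC, hD] at h1 h2 h3
      omega
    · exact Or.inr ⟨he', hf'⟩
end

section
/- Let F be a field, r ≥ 1, and let A be an r × n matrix over F. Let p be an irreducible polynomial over F of degree r, let K be the field extension of F obtained by adjoining a root α of p, and let b = (1, α, α², …, α^{r−1})ᵀ ∈ K^r. Then for every subset S of the columns of A (viewed as vectors of K^r via the inclusion F ⊆ K) whose K-linear span has dimension strictly less than r, the vector b does not lie in the K-linear span of S. -/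
/-- Let `F` be a field, `r ≥ 1`, and `A` an `r × n` matrix over `F`. Let `K` be a field
extension of `F` obtained by adjoining a root `α` of an irreducible polynomial `p` of
degree `r` over `F`, and let `b = (1, α, …, α^{r-1})ᵀ ∈ K^r`. Then for every subset `S`
of the columns of `A` (viewed in `K^r`) whose `K`-linear span has dimension strictly
less than `r`, the vector `b` is not in the `K`-linear span of `S`. -/
theorem powers_not_mem_span_of_small_rank (F K : Type*) [Field F] [Field K] [Algebra F K]
    (r n : ℕ) (hr : 1 ≤ r) (A : Matrix (Fin r) (Fin n) F)
    (p : Polynomial F) (hirr : Irreducible p) (hdeg : p.natDegree = r)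
    (α : K) (hroot : Polynomial.aeval α p = 0)
    (hadj : Algebra.adjoin F {α} = ⊤)
    (S : Set (Fin r → K))
    (hS : S ⊆ Set.range fun j : Fin n => fun i : Fin r => algebraMap F K (A i j))
    (hdim : Module.finrank K (Submodule.span K S) < r) :
    (fun i : Fin r => α ^ (i : ℕ)) ∉ Submodule.span K S := by
  -- the minimal polynomial of α has degree r
  have hmindeg : (minpoly F α).natDegree = r := by
    have hdvd : minpoly F α ∣ p := minpoly.dvd F α hroot
    have hint : IsIntegral F α := by
      refine ⟨p * Polynomial.C (p.leadingCoeff)⁻¹, ?_, ?_⟩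
      · exact Polynomial.monic_mul_leadingCoeff_inv hirr.ne_zero
      · show Polynomial.aeval α (p * Polynomial.C p.leadingCoeff⁻¹) = 0
        rw [map_mul, hroot, zero_mul]
    have hassoc : Associated (minpoly F α) p :=
      (minpoly.irreducible hint).associated_of_dvd hirr hdvd
    rw [← hdeg]
    exact Polynomial.natDegree_eq_natDegree (Polynomial.degree_eq_degree_of_associated hassoc)
  -- powers of α up to r-1 are F-linearly independent
  have hli : LinearIndependent F fun i : Fin r => α ^ (i : ℕ) := by
    have := linearIndependent_pow (K := F) α
    rwa [hmindeg] at this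
  -- the embedding map
  set e : (Fin r → F) → (Fin r → K) := fun v i => algebraMap F K (v i) with he
  set T : Set (Fin r → F) := e ⁻¹' S with hT
  have hST : e '' T = S := by
    apply Set.image_preimage_eq_iff.2
    intro s hs
    obtain ⟨j, rfl⟩ := hS hs
    exact ⟨fun i => A i j, rfl⟩
  intro hb
  -- the F-span of T is not everything
  have hTne : Submodule.span F T ≠ ⊤ := by
    intro htop
    -- e maps span F T into span K S
    have hmap : ∀ v ∈ Submodule.span F T, e v ∈ Submodule.span K S := by
      intro v hv
      induction hv using Submodule.span_induction with
      | mem x hx =>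
          exact Submodule.subset_span (hST ▸ Set.mem_image_of_mem e hx)
      | zero =>
          have h0 : e 0 = 0 := by funext i; simp [he]
          rw [h0]; exact Submodule.zero_mem _
      | add x y hx hy ihx ihy =>
          have : e (x + y) = e x + e y := by
            funext i; simp [he, map_add]
          rw [this]; exact Submodule.add_mem _ ihx ihy
      | smul c x hx ih =>
          have : e (c • x) = (algebraMap F K c) • e x := by
            funext i; simp [he, Algebra.smul_def]
          rw [this]; exact Submodule.smul_mem _ _ ih
    have hsingle : ∀ i : Fin r, (Pi.single i (1 : K) : Fin r → K) ∈ Submodule.span K S := by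
      intro i
      have h1 : (Pi.single i (1 : F) : Fin r → F) ∈ Submodule.span F T := htop ▸ trivial
      have h2 := hmap _ h1
      have : e (Pi.single i (1 : F)) = Pi.single i (1 : K) := by
        funext j
        by_cases hij : j = i
        · subst hij; simp [he]
        · simp [he, Pi.single_apply, hij]
      rwa [this] at h2
    have htop' : Submodule.span K S = ⊤ := by
      rw [eq_top_iff]
      intro w _
      have : w ∈ Submodule.span K (Set.range fun i : Fin r => (Pi.single i (1 : K) : Fin r → K)) := by
        have hrange : (Set.range fun i : Fin r => (Pi.single i (1 : K) : Fin r → K)) =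
            Set.range ⇑(Pi.basisFun K (Fin r)) := by
          ext x
          simp only [Set.mem_range, Pi.basisFun_apply]
        rw [hrange, (Pi.basisFun K (Fin r)).span_eq]
        trivial
      refine Submodule.span_le.2 ?_ this
      rintro _ ⟨i, rfl⟩
      exact hsingle i
    rw [htop'] at hdim
    have : Module.finrank K (⊤ : Submodule K (Fin r → K)) = r := by
      rw [finrank_top, Module.finrank_pi]
      simp
    omega
  -- get a nonzero dual functional vanishing on span F T
  obtain ⟨φ, hφne, hφbot⟩ :=
    Submodule.exists_dual_map_eq_bot_of_lt_top (lt_top_iff_ne_top.2 hTne) inferInstance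
  set c : Fin r → F := fun i => φ (Pi.single i 1) with hc
  have hφv : ∀ v : Fin r → F, φ v = ∑ i, v i * c i := by
    intro v
    rw [LinearMap.pi_apply_eq_sum_univ φ v]
    refine Finset.sum_congr rfl fun i _ => ?_
    rw [smul_eq_mul, hc]
    congr 1
    congr 1
    funext j
    simp [Pi.single_apply, eq_comm]
  have hcne : c ≠ 0 := by
    intro h0
    apply hφne
    apply LinearMap.ext
    intro v
    rw [hφv v, h0]
    simp
  -- the K-linear functional
  set ψ : (Fin r → K) →ₗ[K] K :=
    ∑ i : Fin r, (algebraMap F K (c i)) • LinearMap.proj i with hψ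
  have hψapp : ∀ w : Fin r → K, ψ w = ∑ i, algebraMap F K (c i) * w i := by
    intro w
    simp only [hψ, LinearMap.sum_apply, LinearMap.smul_apply, LinearMap.proj_apply,
      smul_eq_mul]
  have hψS : ∀ s ∈ S, ψ s = 0 := by
    intro s hs
    obtain ⟨v, hvT, rfl⟩ : ∃ v, v ∈ T ∧ e v = s := by
      rw [← hST] at hs; obtain ⟨v, hv, rfl⟩ := hs; exact ⟨v, hv, rfl⟩
    have hφv0 : φ v = 0 := by
      have : φ v ∈ Submodule.map φ (Submodule.span F T) :=
        ⟨v, Submodule.subset_span hvT, rfl⟩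
      rw [hφbot] at this
      simpa using this
    rw [hψapp]
    have : ∑ i, algebraMap F K (c i) * e v i = algebraMap F K (∑ i, v i * c i) := by
      rw [map_sum]
      refine Finset.sum_congr rfl fun i _ => ?_
      rw [he, map_mul, mul_comm]
    rw [this, ← hφv v, hφv0, map_zero]
  have hker : Submodule.span K S ≤ LinearMap.ker ψ := by
    rw [Submodule.span_le]
    intro s hs
    exact LinearMap.mem_ker.2 (hψS s hs)
  have hψb : ψ (fun i : Fin r => α ^ (i : ℕ)) = 0 := hker hb
  rw [hψapp] at hψb
  -- contradiction with linear independence of powers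
  apply hcne
  have := Fintype.linearIndependent_iff.1 hli c ?_
  · funext i; exact this i
  · rw [← hψb]
    refine Finset.sum_congr rfl fun i _ => ?_
    rw [Algebra.smul_def]
end

section
/- Let M be a finite matroid on ground set E with rank function r_M, let Z ⊆ E, and let c be an element not in E. Define R on subsets of E ∪ {c} by R(X) = r_M(X) for X ⊆ E, and, for X ⊆ E, R(X ∪ {c}) = r_M(X) if μ_M(Z,X) = r_M(X), and R(X ∪ {c}) = r_M(X) + 1 otherwise. Then R is the rank function of a matroid on E ∪ {c}; that is, there exists a matroid M' on E ∪ {c} whose rank function is R (this is the operation of placing c freely into the guts of the separation (Z, E∖Z)). -/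
/-!
Write `ρ(X)` for the rank that `X ∪ {c}` should receive. By submodularity `μ_Z(X) ≥ r(X)`, so
`ρ = min (r + 1) μ_Z`. A function `ρ` with `r ≤ ρ ≤ r + 1`, unit increase, submodularity and
`ρ - r` antitone always defines a single-element extension. Here `μ_Z` is submodular with unit
increase, and `μ_Z - r` is antitone by two applications of submodularity; the minimum of two
submodular functions whose difference is antitone is again submodular.
-/

theorem min_sup_add_min_inf_le {β : Type*} [Lattice β] {f g : β → ℤ} {E : β}
    (hf : ∀ x ≤ E, ∀ y ≤ E, f (x ⊔ y) + f (x ⊓ y) ≤ f x + f y)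
    (hg : ∀ x ≤ E, ∀ y ≤ E, g (x ⊔ y) + g (x ⊓ y) ≤ g x + g y)
    (hgf : ∀ x y, x ≤ y → y ≤ E → g y - f y ≤ g x - f x) {x y : β} (hx : x ≤ E) (hy : y ≤ E) :
    min (f (x ⊔ y)) (g (x ⊔ y)) + min (f (x ⊓ y)) (g (x ⊓ y)) ≤
      min (f x) (g x) + min (f y) (g y) := by
  have hfxy := hf x hx y hy
  have hgxy := hg x hx y hy
  -- when the minimum is attained by different functions at `x` and `y`, compare at `x ⊔ y`
  have hx' := hgf x _ le_sup_left (sup_le hx hy)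
  have hy' := hgf y _ le_sup_right (sup_le hx hy)
  omega

theorem Finset.forall_subset_insert {α : Type*} [DecidableEq α] {P : Finset α → Prop}
    {E : Finset α} {c : α} (h : ∀ X ⊆ E, P X) (h_insert : ∀ X ⊆ E, P (insert c X)) :
    ∀ X ⊆ insert c E, P X := by
  intro X hX
  by_cases hcX : c ∈ X
  · rw [← Finset.insert_erase hcX]
    exact h_insert _ (Finset.subset_insert_iff.mp hX)
  · exact h X ((Finset.subset_insert_iff_of_notMem hcX).mp hX)

namespace FinMatroid

open Finset

variable {α : Type*} [DecidableEq α] (M : FinMatroid α)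

/-- Conditions on `ρ` under which giving `X ∪ {c}` the rank `ρ X` extends `M` to a matroid on
`E ∪ {c}`. -/
structure IsExtensionRank (ρ : Finset α → ℕ) : Prop where
  r_le : ∀ X ⊆ M.E, M.r X ≤ ρ X
  le_r_add_one : ∀ X ⊆ M.E, ρ X ≤ M.r X + 1
  le_insert : ∀ X ⊆ M.E, ∀ e ∈ M.E, ρ X ≤ ρ (insert e X)
  insert_le : ∀ X ⊆ M.E, ∀ e ∈ M.E, ρ (insert e X) ≤ ρ X + 1
  submod : ∀ X ⊆ M.E, ∀ Y ⊆ M.E, ρ (X ∪ Y) + ρ (X ∩ Y) ≤ ρ X + ρ Y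
  add_r_le : ∀ X Y, X ⊆ Y → Y ⊆ M.E → ρ Y + M.r X ≤ ρ X + M.r Y

def extendRank (ρ : Finset α → ℕ) (c : α) (X : Finset α) : ℕ :=
  if c ∈ X then ρ (X.erase c) else M.r X

variable {M} {ρ : Finset α → ℕ} {c : α}

theorem extendRank_of_notMem {X : Finset α} (hcX : c ∉ X) : M.extendRank ρ c X = M.r X :=
  if_neg hcX

theorem extendRank_insert {X : Finset α} (hcX : c ∉ X) :
    M.extendRank ρ c (insert c X) = ρ X := by
  rw [extendRank, if_pos (X.mem_insert_self c), erase_insert hcX]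

namespace IsExtensionRank

theorem extendRank_le_insert (hρ : M.IsExtensionRank ρ) (hc : c ∉ M.E) :
    ∀ X ⊆ insert c M.E, ∀ e ∈ insert c M.E,
      M.extendRank ρ c X ≤ M.extendRank ρ c (insert e X) := by
  have hcE {X : Finset α} (hX : X ⊆ M.E) : c ∉ X := notMem_mono hX hc
  refine forall_subset_insert (fun X hX => ?_) (fun X hX => ?_) <;>
    refine (forall_mem_insert _ _ _).mpr ⟨?_, fun e he => ?_⟩
  · rw [extendRank_insert (hcE hX), extendRank_of_notMem (hcE hX)]
    exact hρ.r_le X hX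
  · have hXe := insert_subset he hX
    rw [extendRank_of_notMem (hcE hX), extendRank_of_notMem (hcE hXe)]
    exact M.r_le_insert X hX e he
  · rw [insert_idem]
  · have hXe := insert_subset he hX
    rw [insert_comm, extendRank_insert (hcE hX), extendRank_insert (hcE hXe)]
    exact hρ.le_insert X hX e he

theorem extendRank_insert_le (hρ : M.IsExtensionRank ρ) (hc : c ∉ M.E) :
    ∀ X ⊆ insert c M.E, ∀ e ∈ insert c M.E,
      M.extendRank ρ c (insert e X) ≤ M.extendRank ρ c X + 1 := by
  have hcE {X : Finset α} (hX : X ⊆ M.E) : c ∉ X := notMem_mono hX hc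
  refine forall_subset_insert (fun X hX => ?_) (fun X hX => ?_) <;>
    refine (forall_mem_insert _ _ _).mpr ⟨?_, fun e he => ?_⟩
  · rw [extendRank_insert (hcE hX), extendRank_of_notMem (hcE hX)]
    exact hρ.le_r_add_one X hX
  · have hXe := insert_subset he hX
    rw [extendRank_of_notMem (hcE hX), extendRank_of_notMem (hcE hXe)]
    exact M.r_insert_le X hX e he
  · rw [insert_idem]
    exact Nat.le_succ _
  · have hXe := insert_subset he hX
    rw [insert_comm, extendRank_insert (hcE hX), extendRank_insert (hcE hXe)]
    exact hρ.insert_le X hX e he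

theorem extendRank_submod (hρ : M.IsExtensionRank ρ) (hc : c ∉ M.E) :
    ∀ X ⊆ insert c M.E, ∀ Y ⊆ insert c M.E,
      M.extendRank ρ c (X ∪ Y) + M.extendRank ρ c (X ∩ Y) ≤
        M.extendRank ρ c X + M.extendRank ρ c Y := by
  have hcE {X : Finset α} (hX : X ⊆ M.E) : c ∉ X := notMem_mono hX hc
  refine forall_subset_insert (fun X hX => ?_) (fun X hX => ?_) <;>
    refine forall_subset_insert (fun Y hY => ?_) (fun Y hY => ?_) <;>
    have hXY := union_subset hX hY <;>
    have hXY' := (inter_subset_left (s₂ := Y)).trans hX <;>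
    simp only [insert_union, union_insert, insert_idem,
      ← insert_inter_distrib, insert_inter_of_notMem (hcE hY),
      inter_insert_of_notMem (hcE hX), extendRank_insert (hcE hX),
      extendRank_insert (hcE hY), extendRank_insert (hcE hXY),
      extendRank_insert (hcE hXY'), extendRank_of_notMem (hcE hX),
      extendRank_of_notMem (hcE hY), extendRank_of_notMem (hcE hXY),
      extendRank_of_notMem (hcE hXY')]
  · exact M.r_submod X hX Y hY
  · have := hρ.add_r_le Y (X ∪ Y) subset_union_right hXY
    have := M.r_submod X hX Y hY
    omega
  · have := hρ.add_r_le X (X ∪ Y) subset_union_left hXY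
    have := M.r_submod X hX Y hY
    omega
  · exact hρ.submod X hX Y hY

theorem exists_extension (hρ : M.IsExtensionRank ρ) (hc : c ∉ M.E) :
    ∃ M' : FinMatroid α, M'.E = insert c M.E ∧ (∀ X ⊆ M.E, M'.r X = M.r X) ∧
      ∀ X ⊆ M.E, M'.r (insert c X) = ρ X :=
  ⟨⟨insert c M.E, M.extendRank ρ c, extendRank_of_notMem (notMem_empty c) ▸ M.r_empty,
      hρ.extendRank_le_insert hc, hρ.extendRank_insert_le hc, hρ.extendRank_submod hc⟩,
    rfl, fun _ hX => extendRank_of_notMem (notMem_mono hX hc),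
    fun _ hX => extendRank_insert (notMem_mono hX hc)⟩

end IsExtensionRank

variable (M) {Z X Y : Finset α} {e : α}

theorem r_union_add_r_union_le {A : Finset α} (hA : A ⊆ M.E) (hX : X ⊆ M.E) (hY : Y ⊆ M.E) :
    M.r (A ∪ (X ∪ Y)) + M.r (A ∪ (X ∩ Y)) ≤ M.r (A ∪ X) + M.r (A ∪ Y) := by
  rw [union_union_distrib_left, union_inter_distrib_left]
  exact M.r_submod _ (union_subset hA hX) _ (union_subset hA hY)

theorem mu_union_add_mu_inter_le (hZ : Z ⊆ M.E) (hX : X ⊆ M.E) (hY : Y ⊆ M.E) :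
    M.mu Z (X ∪ Y) + M.mu Z (X ∩ Y) ≤ M.mu Z X + M.mu Z Y := by
  have hZX := M.r_union_add_r_union_le hZ hX hY
  have hZcX := M.r_union_add_r_union_le (sdiff_subset (t := Z)) hX hY
  unfold mu
  omega

theorem mu_le_mu_insert (hZ : Z ⊆ M.E) (hX : X ⊆ M.E) (he : e ∈ M.E) :
    M.mu Z X ≤ M.mu Z (insert e X) := by
  have hZX := M.r_le_insert (Z ∪ X) (union_subset hZ hX) e he
  have hZcX := M.r_le_insert (M.E \ Z ∪ X) (union_subset sdiff_subset hX) e he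
  rw [← union_insert] at hZX hZcX
  unfold mu
  omega

theorem mu_add_r_le (hZ : Z ⊆ M.E) (hXY : X ⊆ Y) (hY : Y ⊆ M.E) :
    M.mu Z Y + M.r X ≤ M.mu Z X + M.r Y := by
  have hX := hXY.trans hY
  have h₁ := M.r_submod (Z ∪ X) (union_subset hZ hX) Y hY
  have h₂ := M.r_submod (M.E \ Z ∪ X) (union_subset sdiff_subset hX)
    (X ∪ Z ∩ Y) (union_subset hX (inter_subset_left.trans hZ))
  have e₁ : Z ∪ X ∪ Y = Z ∪ Y := by grind
  have e₂ : (Z ∪ X) ∩ Y = X ∪ Z ∩ Y := by grind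
  have e₃ : M.E \ Z ∪ X ∪ (X ∪ Z ∩ Y) = M.E \ Z ∪ Y := by grind
  have e₄ : (M.E \ Z ∪ X) ∩ (X ∪ Z ∩ Y) = X := by grind
  rw [e₁, e₂] at h₁
  rw [e₃, e₄] at h₂
  unfold mu
  omega

theorem r_le_mu (hZ : Z ⊆ M.E) (hX : X ⊆ M.E) : (M.r X : ℤ) ≤ M.mu Z X := by
  have h := M.mu_add_r_le hZ hX subset_rfl
  rw [mu, union_eq_right.mpr hZ, union_eq_right.mpr sdiff_subset] at h
  omega

theorem mu_insert_le (hZ : Z ⊆ M.E) (hX : X ⊆ M.E) (he : e ∈ M.E) :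
    M.mu Z (insert e X) ≤ M.mu Z X + 1 := by
  have h := M.mu_add_r_le hZ (subset_insert e X) (insert_subset he hX)
  have := M.r_insert_le X hX e he
  omega

def gutsRank (Z X : Finset α) : ℕ :=
  if M.mu Z X = M.r X then M.r X else M.r X + 1

theorem gutsRank_eq_min (hZ : Z ⊆ M.E) (hX : X ⊆ M.E) :
    (M.gutsRank Z X : ℤ) = min ((M.r X : ℤ) + 1) (M.mu Z X) := by
  have := M.r_le_mu hZ hX
  unfold gutsRank
  split_ifs <;> push_cast <;> omega

theorem isExtensionRank_gutsRank (hZ : Z ⊆ M.E) : M.IsExtensionRank (M.gutsRank Z) where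
  r_le X hX := by
    have := M.r_le_mu hZ hX
    zify
    rw [M.gutsRank_eq_min hZ hX]
    omega
  le_r_add_one X hX := by
    zify
    rw [M.gutsRank_eq_min hZ hX]
    omega
  le_insert X hX e he := by
    have := M.r_le_insert X hX e he
    have := M.mu_le_mu_insert hZ hX he
    zify
    rw [M.gutsRank_eq_min hZ hX, M.gutsRank_eq_min hZ (insert_subset he hX)]
    omega
  insert_le X hX e he := by
    have := M.r_insert_le X hX e he
    have := M.mu_insert_le hZ hX he
    zify
    rw [M.gutsRank_eq_min hZ hX, M.gutsRank_eq_min hZ (insert_subset he hX)]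
    omega
  submod X hX Y hY := by
    zify
    rw [M.gutsRank_eq_min hZ hX, M.gutsRank_eq_min hZ hY,
      M.gutsRank_eq_min hZ (union_subset hX hY),
      M.gutsRank_eq_min hZ (inter_subset_left.trans hX)]
    exact min_sup_add_min_inf_le (f := fun X => (M.r X : ℤ) + 1) (g := M.mu Z)
      (fun X hX Y hY => by
        have := M.r_submod X hX Y hY
        simp only [sup_eq_union, inf_eq_inter]
        omega)
      (fun X hX Y hY => M.mu_union_add_mu_inter_le hZ hX hY)
      (fun X Y hXY hY => by have := M.mu_add_r_le hZ hXY hY; omega) hX hY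
  add_r_le X Y hXY hY := by
    have := M.mu_add_r_le hZ hXY hY
    zify
    rw [M.gutsRank_eq_min hZ (hXY.trans hY), M.gutsRank_eq_min hZ hY]
    omega

end FinMatroid

open FinMatroid in
/-- Placing `c` freely into the guts of the separation `(Z, E \ Z)`: the function `R`
which agrees with `r_M` on subsets of `E`, and with `R(X ∪ {c}) = r_M(X)` if
`μ_M(Z, X) = r_M(X)` and `R(X ∪ {c}) = r_M(X) + 1` otherwise, is the rank function of a
matroid on `E ∪ {c}`. -/
theorem exists_free_guts_extension {α : Type*} [DecidableEq α] (M : FinMatroid α)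
    (Z : Finset α) (hZ : Z ⊆ M.E) (c : α) (hc : c ∉ M.E) :
    ∃ M' : FinMatroid α, M'.E = insert c M.E ∧
      (∀ X ⊆ M.E, M'.r X = M.r X) ∧
      (∀ X ⊆ M.E, M'.r (insert c X) =
        if M.mu Z X = (M.r X : ℤ) then M.r X else M.r X + 1) :=
  (M.isExtensionRank_gutsRank hZ).exists_extension hc
end
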